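/- arXiv:1111.6230 — 3 statements merged into one kernel-verified Lean document; each statement's English description precedes it below -/
import Mathlib

section
/- Let H be a separable Hilbert space, let η₁,…,η_n be H-valued random variables with E‖η_j‖² < ∞ for all j, let 𝒢₀ ⊆ 𝒢₁ ⊆ … ⊆ 𝒢_n be sub-σ-algebras, let S_n = Σ_{j=1}^n η_j, let m ≥ 1 be an integer, and with the convention η_j = 0 for j > n define, for 1 ≤ i ≤ n, d_i = E[‖S_n‖ | 𝒢_i] − E[‖S_n‖ | 𝒢_{i−1}] − E[‖S_n − η_i − ⋯ − η_{i+m−1}‖ | 𝒢_i] + E[‖S_n − η_i − ⋯ − η_{i+m−1}‖ | 𝒢_{i−1}]. Then almost surely E[d_i² | 𝒢_{i−1}] ≤ m·Σ_{j=i}^{i+m−1} E[‖η_j‖² | 𝒢_{i−1}]. -/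
/-!
`d_i` is the increment `E[Z | 𝒢_i] - E[Z | 𝒢_{i-1}]` of the Doob martingale of
`Z = ‖S_n‖ - ‖S_n - η_i - ⋯ - η_{i+m-1}‖`. By the tower property its conditional second moment
given `𝒢_{i-1}` is the conditional variance of `E[Z | 𝒢_i]`, hence at most `E[Z² | 𝒢_{i-1}]`
by conditional Jensen. Pointwise, the reverse triangle inequality and Cauchy–Schwarz give
`Z² ≤ ‖η_i + ⋯ + η_{i+m-1}‖² ≤ m (‖η_i‖² + ⋯ + ‖η_{i+m-1}‖²)`.
-/

open MeasureTheory ProbabilityTheory Finset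

section CondExpSquare

variable {Ω : Type*} {m m₁ m₂ m₀ : MeasurableSpace Ω} {μ : Measure[m₀] Ω} {X : Ω → ℝ}

lemma sq_condExp_ae_le_condExp_sq [IsFiniteMeasure μ] (hm : m ≤ m₀) (hX : MemLp X 2 μ) :
    μ[X | m] ^ 2 ≤ᵐ[μ] μ[X ^ 2 | m] := by
  have hvar_nonneg : 0 ≤ᵐ[μ] Var[X; μ | m] := condExp_nonneg (ae_of_all _ fun ω => sq_nonneg _)
  filter_upwards [condVar_ae_eq_condExp_sq_sub_sq_condExp hm hX, hvar_nonneg] with ω hvar h0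
  simp only [hvar, Pi.sub_apply, Pi.zero_apply] at h0
  linarith

lemma condExp_sq_condExp_sub_condExp_ae_le [IsFiniteMeasure μ] (h₁₂ : m₁ ≤ m₂) (h₂ : m₂ ≤ m₀)
    (hX : MemLp X 2 μ) :
    μ[(μ[X | m₂] - μ[X | m₁]) ^ 2 | m₁] ≤ᵐ[μ] μ[X ^ 2 | m₁] := by
  have hY : MemLp (μ[X | m₂]) 2 μ := hX.condExp one_le_two
  have htower := condExp_condExp_of_le (μ := μ) (f := X) h₁₂ h₂
  calc μ[(μ[X | m₂] - μ[X | m₁]) ^ 2 | m₁]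
      =ᵐ[μ] Var[μ[X | m₂]; μ | m₁] := condExp_congr_ae <| by
        filter_upwards [htower] with ω h
        simp only [Pi.pow_apply, Pi.sub_apply, h]
    _ ≤ᵐ[μ] μ[μ[X | m₂] ^ 2 | m₁] := condVar_ae_le_condExp_sq (h₁₂.trans h₂) hY
    _ ≤ᵐ[μ] μ[μ[X ^ 2 | m₂] | m₁] :=
        condExp_mono hY.integrable_sq integrable_condExp (sq_condExp_ae_le_condExp_sq h₂ hX)
    _ =ᵐ[μ] μ[X ^ 2 | m₁] := condExp_condExp_of_le h₁₂ h₂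

lemma condExp_ae_le_const_mul_sum_condExp {ι : Type*} {s : Finset ι} {f : ι → Ω → ℝ} {c : ℝ}
    (hX : Integrable X μ) (hf : ∀ j ∈ s, Integrable (f j) μ)
    (hle : ∀ ω, X ω ≤ c * ∑ j ∈ s, f j ω) :
    μ[X | m] ≤ᵐ[μ] fun ω => c * ∑ j ∈ s, (μ[f j | m]) ω := by
  have hsum : Integrable (∑ j ∈ s, f j) μ := integrable_finsetSum' s hf
  have hbound : X ≤ᵐ[μ] c • ∑ j ∈ s, f j :=
    ae_of_all _ fun ω => by simpa [Finset.sum_apply] using hle ω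
  filter_upwards [condExp_mono (m := m) hX (hsum.smul c) hbound,
    condExp_smul (m := m) c (∑ j ∈ s, f j), condExp_finsetSum hf m] with ω hmono hsmul hfin
  rw [hsmul] at hmono
  simpa only [Pi.smul_apply, smul_eq_mul, hfin, Finset.sum_apply] using hmono

end CondExpSquare

lemma sq_norm_sub_norm_sub_sum_le {E ι : Type*} [SeminormedAddCommGroup E] (x : E)
    (s : Finset ι) (y : ι → E) :
    (‖x‖ - ‖x - ∑ j ∈ s, y j‖) ^ 2 ≤ #s * ∑ j ∈ s, ‖y j‖ ^ 2 := by
  have h : |‖x‖ - ‖x - ∑ j ∈ s, y j‖| ≤ ‖∑ j ∈ s, y j‖ := by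
    simpa only [sub_sub_cancel] using abs_norm_sub_norm_le x (x - ∑ j ∈ s, y j)
  calc (‖x‖ - ‖x - ∑ j ∈ s, y j‖) ^ 2
      = |‖x‖ - ‖x - ∑ j ∈ s, y j‖| ^ 2 := (sq_abs _).symm
    _ ≤ (∑ j ∈ s, ‖y j‖) ^ 2 := by gcongr; exact h.trans (norm_sum_le _ _)
    _ ≤ #s * ∑ j ∈ s, ‖y j‖ ^ 2 := sq_sum_le_card_mul_sum_sq

theorem stmt_8_general {Ω : Type*} [m0 : MeasurableSpace Ω] (μ : Measure Ω) [IsProbabilityMeasure μ]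
    {H : Type*} [NormedAddCommGroup H]
    (n m : ℕ)
    (η : ℕ → Ω → H) (hηL2 : ∀ j, MemLp (η j) 2 μ)
    (G : ℕ → MeasurableSpace Ω) (hGmono : Monotone G) (hGle : ∀ i, G i ≤ m0)
    (S : Ω → H) (hS : ∀ ω, S ω = ∑ j ∈ Finset.Icc 1 n, η j ω)
    (η' : ℕ → Ω → H) (hη' : ∀ (j : ℕ) (ω : Ω), η' j ω = if j ≤ n then η j ω else 0)
    (d : ℕ → Ω → ℝ)
    (hd : ∀ i : ℕ, d i = fun ω =>
      (μ[fun ω' => ‖S ω'‖ | G i]) ω - (μ[fun ω' => ‖S ω'‖ | G (i - 1)]) ω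
      - (μ[fun ω' => ‖S ω' - ∑ j ∈ Finset.Icc i (i + m - 1), η' j ω'‖ | G i]) ω
      + (μ[fun ω' => ‖S ω' - ∑ j ∈ Finset.Icc i (i + m - 1), η' j ω'‖ | G (i - 1)]) ω) :
    ∀ i : ℕ, 1 ≤ i → i ≤ n →
      ∀ᵐ ω ∂μ,
        (μ[fun ω' => d i ω' ^ 2 | G (i - 1)]) ω
          ≤ m * ∑ j ∈ Finset.Icc i (i + m - 1), (μ[fun ω' => ‖η' j ω'‖ ^ 2 | G (i - 1)]) ω := by
  intro i hi _
  have hdi := hd i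
  set s := Finset.Icc i (i + m - 1)
  have hcard : #s = m := by simp only [s, Nat.card_Icc]; omega
  have hη'L2 (j : ℕ) : MemLp (η' j) 2 μ := by
    by_cases hj : j ≤ n <;> simp [funext (hη' j), hj, hηL2]
  have hSL2 : MemLp S 2 μ := by
    simpa only [funext hS] using memLp_finsetSum _ fun j _ => hηL2 j
  set A : Ω → ℝ := fun ω => ‖S ω‖
  set B : Ω → ℝ := fun ω => ‖S ω - ∑ j ∈ s, η' j ω‖
  have hA : MemLp A 2 μ := hSL2.norm
  have hB : MemLp B 2 μ := (hSL2.sub (memLp_finsetSum _ fun j _ => hη'L2 j)).norm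
  have hd_sq : (fun ω => d i ω ^ 2) =ᵐ[μ] (μ[A - B | G i] - μ[A - B | G (i - 1)]) ^ 2 := by
    filter_upwards [condExp_sub (hA.integrable one_le_two) (hB.integrable one_le_two) (G i),
      condExp_sub (hA.integrable one_le_two) (hB.integrable one_le_two) (G (i - 1))] with ω h h'
    simp only [hdi, Pi.pow_apply, Pi.sub_apply, h, h']
    ring
  have hbound (ω : Ω) : ((A - B) ^ 2) ω ≤ m * ∑ j ∈ s, ‖η' j ω‖ ^ 2 :=
    hcard ▸ sq_norm_sub_norm_sub_sum_le (S ω) s (η' · ω)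
  filter_upwards [condExp_congr_ae (m := G (i - 1)) hd_sq,
    condExp_sq_condExp_sub_condExp_ae_le (hGmono (Nat.sub_le i 1)) (hGle i) (hA.sub hB),
    condExp_ae_le_const_mul_sum_condExp (m := G (i - 1)) (hA.sub hB).integrable_sq
      (fun j _ => (hη'L2 j).norm.integrable_sq) hbound] with ω hsq hvar hle
  exact hsq ▸ hvar.trans hle

/-- Lemma 2, second bound: with `S_n = Σ_{j=1}^n η_j`, sub-σ-algebras
`𝒢₀ ⊆ 𝒢₁ ⊆ ⋯`, `E‖η_j‖² < ∞`, the convention `η_j = 0` for `j > n`, and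
`d_i = E[‖S_n‖|𝒢_i] − E[‖S_n‖|𝒢_{i−1}] − E[‖S_n − η_i − ⋯ − η_{i+m−1}‖|𝒢_i]
+ E[‖S_n − η_i − ⋯ − η_{i+m−1}‖|𝒢_{i−1}]`, one has almost surely
`E[d_i²|𝒢_{i−1}] ≤ m·Σ_{j=i}^{i+m−1} E[‖η_j‖²|𝒢_{i−1}]`. -/
theorem stmt_8 {Ω : Type*} [m0 : MeasurableSpace Ω] (μ : Measure Ω) [IsProbabilityMeasure μ]
    {H : Type*} [NormedAddCommGroup H] [InnerProductSpace ℝ H] [CompleteSpace H]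
    [SecondCountableTopology H]
    (n m : ℕ) (hn : 1 ≤ n) (hm : 1 ≤ m)
    (η : ℕ → Ω → H) (hηL2 : ∀ j, MemLp (η j) 2 μ)
    (G : ℕ → MeasurableSpace Ω) (hGmono : Monotone G) (hGle : ∀ i, G i ≤ m0)
    (S : Ω → H) (hS : ∀ ω, S ω = ∑ j ∈ Finset.Icc 1 n, η j ω)
    (η' : ℕ → Ω → H) (hη' : ∀ (j : ℕ) (ω : Ω), η' j ω = if j ≤ n then η j ω else 0)
    (d : ℕ → Ω → ℝ)
    (hd : ∀ i : ℕ, d i = fun ω =>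
      (μ[fun ω' => ‖S ω'‖ | G i]) ω - (μ[fun ω' => ‖S ω'‖ | G (i - 1)]) ω
      - (μ[fun ω' => ‖S ω' - ∑ j ∈ Finset.Icc i (i + m - 1), η' j ω'‖ | G i]) ω
      + (μ[fun ω' => ‖S ω' - ∑ j ∈ Finset.Icc i (i + m - 1), η' j ω'‖ | G (i - 1)]) ω) :
    ∀ i : ℕ, 1 ≤ i → i ≤ n →
      ∀ᵐ ω ∂μ,
        (μ[fun ω' => d i ω' ^ 2 | G (i - 1)]) ω
          ≤ m * ∑ j ∈ Finset.Icc i (i + m - 1), (μ[fun ω' => ‖η' j ω'‖ ^ 2 | G (i - 1)]) ω :=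
  stmt_8_general (m0 := m0) μ n m η hηL2 G hGmono hGle S hS η' hη' d hd
end

section
/- Let m and n be positive integers with m dividing n, and let Z₁,…,Z_n be identically distributed {0,1}-valued random variables with p̃ := P(Z_i = 1), such that Z_i and Z_j are independent whenever |i − j| ≥ m (more strongly, for each residue class r mod m, the variables {Z_{r+jm}} are mutually independent). Let k be a positive integer with n·p̃ ≥ 2k. Then P(Σ_{i=1}^n Z_i ≤ k) ≤ 2m·exp(−(3/14)·k/m). -/
/-!
Split `∑ᵢ Zᵢ` along the residue classes mod `m` into `m` sums of `n / m` independent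
Bernoulli variables. If the total is at most `k`, some class sum is at most `k / m`, which is at
most half of its mean `n p̃ / m`; a Chernoff bound at `t = -log 2` makes that event have
probability at most `exp (-(3/14) k / m)`, and a union bound over the `m` classes concludes.
-/

open MeasureTheory ProbabilityTheory Finset Real

theorem Finset.sum_range_mul_eq_sum_sum {M : Type*} [AddCommMonoid M] (f : ℕ → M) (N m : ℕ) :
    ∑ i ∈ range (N * m), f i = ∑ r ∈ range m, ∑ j : Fin N, f (r + j * m) := by
  rw [← Fin.sum_univ_eq_sum_range, ← finProdFinEquiv.sum_comp, Fintype.sum_prod_type, sum_comm,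
    ← Fin.sum_univ_eq_sum_range]
  simp [finProdFinEquiv, mul_comm]

theorem Finset.sum_Icc_mul_eq_sum_sum {M : Type*} [AddCommMonoid M] (f : ℕ → M) (N m : ℕ) :
    ∑ i ∈ Icc 1 (N * m), f i = ∑ r ∈ Icc 1 m, ∑ j : Fin N, f (r + j * m) := by
  rw [← Ico_add_one_right_eq_Icc, ← Ico_add_one_right_eq_Icc, sum_Ico_eq_sum_range,
    sum_Ico_eq_sum_range]
  simp only [Nat.add_sub_cancel]
  rw [sum_range_mul_eq_sum_sum]
  refine sum_congr rfl fun r _ => sum_congr rfl fun j _ => congrArg f ?_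
  ring

section

variable {Ω ι : Type*} [MeasurableSpace Ω] {μ : Measure Ω}

theorem integral_eq_measureReal_of_zero_or_one {X : Ω → ℝ} (hX : Measurable X)
    (h01 : ∀ ω, X ω = 0 ∨ X ω = 1) : ∫ ω, X ω ∂μ = μ.real {ω | X ω = 1} := by
  have hX_eq : X = (X ⁻¹' {1}).indicator 1 := by
    ext ω
    rcases h01 ω with h | h <;> simp [h]
  conv_lhs => rw [hX_eq]
  exact integral_indicator_one (hX (measurableSet_singleton 1))

theorem mgf_of_zero_or_one [IsProbabilityMeasure μ] {X : Ω → ℝ} (hX : Measurable X)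
    (h01 : ∀ ω, X ω = 0 ∨ X ω = 1) (t : ℝ) :
    mgf X μ t = 1 + (exp t - 1) * μ.real {ω | X ω = 1} := by
  have hexp : ∀ ω, exp (t * X ω) = 1 + (exp t - 1) * X ω := fun ω => by
    rcases h01 ω with h | h <;> simp [h]
  have hX_int : Integrable X μ :=
    .of_bound hX.aestronglyMeasurable 1
      (.of_forall fun ω => by rcases h01 ω with h | h <;> simp [h])
  simp only [mgf, hexp]
  rw [integral_add (integrable_const 1) (hX_int.const_mul _), integral_const_mul,
    integral_eq_measureReal_of_zero_or_one hX h01]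
  simp

theorem measureReal_sum_le_le_exp_of_zero_or_one {X : ι → Ω → ℝ} (hX : ∀ i, Measurable (X i))
    (h01 : ∀ i ω, X i ω = 0 ∨ X i ω = 1) (h_indep : iIndepFun X μ) (s : Finset ι)
    (ε : ℝ) {t : ℝ} (ht : t ≤ 0) :
    μ.real {ω | ∑ i ∈ s, X i ω ≤ ε}
      ≤ exp (-t * ε + (exp t - 1) * ∑ i ∈ s, μ.real {ω | X i ω = 1}) := by
  have := h_indep.isProbabilityMeasure
  have hX_nonneg : ∀ i ω, 0 ≤ X i ω := fun i ω => by rcases h01 i ω with h | h <;> simp [h]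
  have h_int : Integrable (fun ω => exp (t * (∑ i ∈ s, X i) ω)) μ := by
    refine .of_bound (by fun_prop) 1 (.of_forall fun ω => ?_)
    rw [norm_of_nonneg (exp_nonneg _), exp_le_one_iff, Finset.sum_apply]
    exact mul_nonpos_of_nonpos_of_nonneg ht (sum_nonneg fun i _ => hX_nonneg i ω)
  have h_mgf : mgf (∑ i ∈ s, X i) μ t ≤ exp ((exp t - 1) * ∑ i ∈ s, μ.real {ω | X i ω = 1}) := by
    rw [h_indep.mgf_sum hX, mul_sum, exp_sum]
    refine prod_le_prod (fun i _ => mgf_nonneg) fun i _ => ?_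
    rw [mgf_of_zero_or_one (hX i) (h01 i)]
    linarith [add_one_le_exp ((exp t - 1) * μ.real {ω | X i ω = 1})]
  calc μ.real {ω | ∑ i ∈ s, X i ω ≤ ε}
      = μ.real {ω | (∑ i ∈ s, X i) ω ≤ ε} := by simp only [Finset.sum_apply]
    _ ≤ exp (-t * ε) * mgf (∑ i ∈ s, X i) μ t := measure_le_le_exp_mul_mgf ε ht h_int
    _ ≤ exp (-t * ε) * exp ((exp t - 1) * ∑ i ∈ s, μ.real {ω | X i ω = 1}) := by gcongr
    _ = _ := (exp_add _ _).symm

theorem measureReal_sum_le_le_exp_of_two_mul_le_mean {X : ι → Ω → ℝ}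
    (hX : ∀ i, Measurable (X i)) (h01 : ∀ i ω, X i ω = 0 ∨ X i ω = 1) (h_indep : iIndepFun X μ)
    (s : Finset ι) {ε : ℝ} (hε : 0 ≤ ε) (hε_mean : 2 * ε ≤ ∑ i ∈ s, μ.real {ω | X i ω = 1}) :
    μ.real {ω | ∑ i ∈ s, X i ω ≤ ε} ≤ exp (-(3 / 14) * ε) := by
  refine (measureReal_sum_le_le_exp_of_zero_or_one hX h01 h_indep s ε
    (neg_nonpos.mpr (log_nonneg one_le_two))).trans (exp_le_exp.mpr ?_)
  rw [exp_neg, exp_log two_pos]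
  -- the exponent is `(log 2 - 1) ε`, and `log 2 - 1 < -3/14`
  nlinarith [log_two_lt_d9]

theorem measureReal_sum_le_card_mul_le_sum [IsFiniteMeasure μ] {S : ι → Ω → ℝ} {s : Finset ι}
    (hs : s.Nonempty) (c : ℝ) :
    μ.real {ω | ∑ r ∈ s, S r ω ≤ #s * c} ≤ ∑ r ∈ s, μ.real {ω | S r ω ≤ c} := by
  refine (measureReal_mono (fun ω hω => ?_) (measure_ne_top _ _)).trans
    (measureReal_biUnion_finset_le s _)
  rw [Set.mem_ofPred_eq, ← nsmul_eq_mul, ← sum_const] at hω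
  simpa using exists_le_of_sum_le hs hω

end

theorem stmt_17_general {Ω : Type*} [MeasurableSpace Ω] (μ : Measure Ω) [IsProbabilityMeasure μ]
    (n m k : ℕ) (hm : 1 ≤ m) (hmn : m ∣ n)
    (Z : ℕ → Ω → ℝ) (hZmeas : ∀ i, Measurable (Z i))
    (hZ01 : ∀ i ω, Z i ω = 0 ∨ Z i ω = 1)
    (p : ℝ) (hp : ∀ i ∈ Finset.Icc 1 n, μ {ω | Z i ω = 1} = ENNReal.ofReal p)
    (hindep : ∀ r ∈ Finset.Icc 1 m,
      iIndepFun
        (fun (j : Fin (n / m)) => Z (r + j * m)) μ)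
    (hnp : 2 * (k : ℝ) ≤ n * p) :
    μ {ω | ∑ i ∈ Finset.Icc 1 n, Z i ω ≤ k}
      ≤ ENNReal.ofReal (2 * m * Real.exp (-(3 / 14) * k / m)) := by
  obtain ⟨N, rfl⟩ : ∃ N, n = N * m := ⟨n / m, (Nat.div_mul_cancel hmn).symm⟩
  have hmR : (0 : ℝ) < m := by exact_mod_cast hm
  rw [Nat.mul_div_cancel _ hm] at hindep
  set ε : ℝ := k / m
  have h_mem : ∀ r ∈ Icc 1 m, ∀ j : Fin N, r + j * m ∈ Icc 1 (N * m) := by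
    intro r hr j
    have := Nat.mul_le_mul_right m j.isLt
    simp only [mem_Icc] at hr ⊢
    constructor <;> nlinarith
  have h_mean : 2 * ε ≤ N * p := by
    rw [mul_div_assoc', div_le_iff₀ hmR]
    push_cast at hnp
    linarith
  have h_class : ∀ r ∈ Icc 1 m,
      μ.real {ω | ∑ j : Fin N, Z (r + j * m) ω ≤ ε} ≤ exp (-(3 / 14) * ε) := by
    intro r hr
    refine measureReal_sum_le_le_exp_of_two_mul_le_mean (fun j => hZmeas _) (fun j => hZ01 _)
      (hindep r hr) univ (by positivity) ?_
    simp only [measureReal_def, hp _ (h_mem r hr _), ENNReal.toReal_ofReal', sum_const, card_univ,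
      Fintype.card_fin, nsmul_eq_mul]
    exact h_mean.trans (by gcongr; exact le_max_left p 0)
  have h_sum : ∀ ω, ∑ i ∈ Icc 1 (N * m), Z i ω = ∑ r ∈ Icc 1 m, ∑ j : Fin N, Z (r + j * m) ω :=
    fun ω => sum_Icc_mul_eq_sum_sum (Z · ω) N m
  have hk_eq : (k : ℝ) = #(Icc 1 m) * ε := by
    rw [Nat.card_Icc, Nat.add_sub_cancel, mul_div_cancel₀ _ hmR.ne']
  calc μ {ω | ∑ i ∈ Icc 1 (N * m), Z i ω ≤ k}
      = ENNReal.ofReal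
          (μ.real {ω | ∑ r ∈ Icc 1 m, ∑ j : Fin N, Z (r + j * m) ω ≤ #(Icc 1 m) * ε}) := by
        rw [ofReal_measureReal]
        simp only [h_sum, ← hk_eq]
    _ ≤ ENNReal.ofReal (∑ r ∈ Icc 1 m, exp (-(3 / 14) * ε)) := by
        gcongr
        exact (measureReal_sum_le_card_mul_le_sum (nonempty_Icc.mpr hm) ε).trans
          (sum_le_sum h_class)
    _ ≤ ENNReal.ofReal (2 * m * exp (-(3 / 14) * k / m)) := by
        rw [sum_const, Nat.card_Icc, Nat.add_sub_cancel, nsmul_eq_mul, mul_div_assoc]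
        gcongr
        linarith [exp_pos (-(3 / 14) * ε)]

/-- if `Z₁, …, Z_n` are identically distributed `{0,1}`-valued random
variables with `p̃ = P(Z_i = 1)`, independent within each residue class mod `m`
(`m ∣ n`), and `n·p̃ ≥ 2k`, then `P(Σᵢ Zᵢ ≤ k) ≤ 2m·exp(−(3/14)·k/m)`. -/
theorem stmt_17 {Ω : Type*} [MeasurableSpace Ω] (μ : Measure Ω) [IsProbabilityMeasure μ]
    (n m k : ℕ) (hm : 1 ≤ m) (hmn : m ∣ n) (hn : 1 ≤ n) (hk : 1 ≤ k)
    (Z : ℕ → Ω → ℝ) (hZmeas : ∀ i, Measurable (Z i))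
    (hZ01 : ∀ i ω, Z i ω = 0 ∨ Z i ω = 1)
    (p : ℝ) (hp : ∀ i ∈ Finset.Icc 1 n, μ {ω | Z i ω = 1} = ENNReal.ofReal p)
    (hindep : ∀ r ∈ Finset.Icc 1 m,
      iIndepFun
        (fun (j : Fin (n / m)) => Z (r + j * m)) μ)
    (hnp : 2 * (k : ℝ) ≤ n * p) :
    μ {ω | ∑ i ∈ Finset.Icc 1 n, Z i ω ≤ k}
      ≤ ENNReal.ofReal (2 * m * Real.exp (-(3 / 14) * k / m)) :=
  stmt_17_general μ n m k hm hmn Z hZmeas hZ01 p hp hindep hnp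
end

section
/- Let (F, d) be a pseudometric space, H a normed space, B, M₀ > 0, α > 0, and let r : F → H satisfy ‖r(y)‖ ≤ B for all y ∈ F and ‖r(y) − r(y')‖ ≤ M₀·d(y, y')^α for all y, y' ∈ F. Let x, X₁,…,X_n ∈ F be points ordered so that d(X_{R₁}, x) ≤ d(X_{R₂}, x) ≤ … ≤ d(X_{R_n}, x), let v_{n1} ≥ v_{n2} ≥ … ≥ v_{nn} ≥ 0 be weights with Σ_{i=1}^n v_{ni} = 1, let 1 ≤ k ≤ n, and set H := d(X_{R_k}, x). Then ‖Σ_{i=1}^n v_{ni}(r(X_{R_i}) − r(x))‖ ≤ 2B·Σ_{i=k+1}^n v_{ni} + M₀·H^α. -/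
/-! Split the weighted sum at rank `k`. The `k` nearest points lie within distance
`d(X_{R_k}, x)` of `x`, so Hölder continuity bounds each of their terms by `M₀ H^α`, and their
weights sum to at most `1`; every farther term is bounded by `2B` from the sup bound on `r`. -/

open Finset

theorem norm_sum_smul_union_le {ι E : Type*} [DecidableEq ι] [NormedAddCommGroup E]
    [NormedSpace ℝ E]
    {s t : Finset ι} (hst : Disjoint s t) {w : ι → ℝ} (hw : ∀ i, 0 ≤ w i)
    (hws : ∑ i ∈ s, w i ≤ 1) {f : ι → E} {a b : ℝ} (ha : 0 ≤ a)
    (hfa : ∀ i ∈ s, ‖f i‖ ≤ a) (hfb : ∀ i ∈ t, ‖f i‖ ≤ b) :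
    ‖∑ i ∈ s ∪ t, w i • f i‖ ≤ b * ∑ i ∈ t, w i + a := by
  have hnorm : ∀ i, ‖w i • f i‖ = w i * ‖f i‖ := fun i => by
    rw [norm_smul, Real.norm_of_nonneg (hw i)]
  calc ‖∑ i ∈ s ∪ t, w i • f i‖
      ≤ ∑ i ∈ s ∪ t, ‖w i • f i‖ := norm_sum_le _ _
    _ = ∑ i ∈ s, w i * ‖f i‖ + ∑ i ∈ t, w i * ‖f i‖ := by
        simp only [sum_union hst, hnorm]
    _ ≤ ∑ i ∈ s, w i * a + ∑ i ∈ t, w i * b := by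
        gcongr with i hi i hi
        · exact hw i
        · exact hfa i hi
        · exact hw i
        · exact hfb i hi
    _ = (∑ i ∈ s, w i) * a + b * ∑ i ∈ t, w i := by rw [sum_mul, mul_sum]; simp only [mul_comm]
    _ ≤ 1 * a + b * ∑ i ∈ t, w i := by gcongr
    _ = b * ∑ i ∈ t, w i + a := by ring

theorem stmt_18_general {F : Type*} [PseudoMetricSpace F] {H : Type*} [NormedAddCommGroup H]
    [NormedSpace ℝ H]
    (B M₀ α : ℝ) (hM₀ : 0 < M₀) (hα : 0 < α)
    (r : F → H) (hrB : ∀ y : F, ‖r y‖ ≤ B)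
    (hrH : ∀ y y' : F, ‖r y - r y'‖ ≤ M₀ * dist y y' ^ α)
    (n : ℕ) (x : F) (X : ℕ → F) (R : ℕ → ℕ)
    (hsort : ∀ i j : ℕ, 1 ≤ i → i ≤ j → j ≤ n → dist (X (R i)) x ≤ dist (X (R j)) x)
    (v : ℕ → ℝ) (hv0 : ∀ i, 0 ≤ v i)
    (hvsum : ∑ i ∈ Finset.Icc 1 n, v i = 1)
    (k : ℕ) (hkn : k ≤ n) :
    ‖∑ i ∈ Finset.Icc 1 n, v i • (r (X (R i)) - r x)‖
      ≤ 2 * B * ∑ i ∈ Finset.Icc (k + 1) n, v i + M₀ * dist (X (R k)) x ^ α := by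
  have hsplit : Icc 1 n = Icc 1 k ∪ Icc (k + 1) n := by
    ext i; simp only [mem_Icc, mem_union]; omega
  have hdisj : Disjoint (Icc 1 k) (Icc (k + 1) n) :=
    disjoint_left.2 fun i hi hi' => by simp only [mem_Icc] at hi hi'; omega
  rw [hsplit]
  refine norm_sum_smul_union_le hdisj hv0 ?_ (by positivity) ?_ ?_
  · exact hvsum ▸ sum_le_sum_of_subset_of_nonneg (Icc_subset_Icc le_rfl hkn) fun i _ _ => hv0 i
  · intro i hi
    rw [mem_Icc] at hi
    refine (hrH _ _).trans ?_
    gcongr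
    exact hsort i k hi.1 hi.2 hkn
  · exact fun i _ => (norm_sub_le_of_le (hrB _) (hrB _)).trans_eq (two_mul B).symm

/-- bias bound: if `r : F → H` is bounded by `B` and `α`-Hölder with
constant `M₀`, the points `X_{R₁}, …, X_{R_n}` are ordered by increasing distance to `x`,
and `v_{n1} ≥ ⋯ ≥ v_{nn} ≥ 0` are weights summing to `1`, then with `H = d(X_{R_k}, x)`,
`‖Σᵢ v_{ni}(r(X_{R_i}) − r(x))‖ ≤ 2B·Σ_{i=k+1}^n v_{ni} + M₀·H^α`. -/
theorem stmt_18 {F : Type*} [PseudoMetricSpace F] {H : Type*} [NormedAddCommGroup H]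
    [NormedSpace ℝ H]
    (B M₀ α : ℝ) (hB : 0 < B) (hM₀ : 0 < M₀) (hα : 0 < α)
    (r : F → H) (hrB : ∀ y : F, ‖r y‖ ≤ B)
    (hrH : ∀ y y' : F, ‖r y - r y'‖ ≤ M₀ * dist y y' ^ α)
    (n : ℕ) (hn : 1 ≤ n) (x : F) (X : ℕ → F) (R : ℕ → ℕ)
    (hR : Set.BijOn R (Set.Icc 1 n) (Set.Icc 1 n))
    (hsort : ∀ i j : ℕ, 1 ≤ i → i ≤ j → j ≤ n → dist (X (R i)) x ≤ dist (X (R j)) x)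
    (v : ℕ → ℝ) (hv0 : ∀ i, 0 ≤ v i)
    (hvmono : ∀ i j : ℕ, 1 ≤ i → i ≤ j → j ≤ n → v j ≤ v i)
    (hvsum : ∑ i ∈ Finset.Icc 1 n, v i = 1)
    (k : ℕ) (hk1 : 1 ≤ k) (hkn : k ≤ n) :
    ‖∑ i ∈ Finset.Icc 1 n, v i • (r (X (R i)) - r x)‖
      ≤ 2 * B * ∑ i ∈ Finset.Icc (k + 1) n, v i + M₀ * dist (X (R k)) x ^ α :=
  stmt_18_general B M₀ α hM₀ hα r hrB hrH n x X R hsort v hv0 hvsum k hkn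
end
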